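/- arXiv:1907.03345 — 8 statements merged into one kernel-verified Lean document; each statement's English description precedes it below -/
import Mathlib

section
/- There exist a positive integer k with n = k(p-1) and an isomorphism of ℚ-vector spaces ℚ^n ≅ ℚ(ζ)^k which is equivariant for the ℤ/p-actions, where the generator s of ℤ/p acts on ℚ^n by ρ(s) (extended ℚ-linearly) and on each factor ℚ(ζ) by multiplication by ζ. In particular p-1 divides n. -/
set_option synthInstance.maxHeartbeats 1000000
set_option maxHeartbeats 1000000

/-- `ζ = e^{2πi/p}`, a primitive `p`-th root of unity in `ℂ`. -/
noncomputable def zetaC (p : ℕ) : ℂ := Complex.exp (2 * Real.pi * Complex.I / p)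

/-- The `p`-th cyclotomic field `ℚ(ζ)`, realized as the subfield of `ℂ` generated over `ℚ`
by `ζ = e^{2πi/p}`. -/
noncomputable def Qzeta (p : ℕ) : Subalgebra ℚ ℂ := Algebra.adjoin ℚ {zetaC p}

/-- `ζ` as an element of `ℚ(ζ)`. -/
noncomputable def zetaQ (p : ℕ) : Qzeta p :=
  ⟨zetaC p, Algebra.self_mem_adjoin_singleton ℚ (zetaC p)⟩

/-!
Since `ρ(s)ᵖ = 1` and `ρ(s)` fixes no nonzero vector, `ρ(s) - 1` is invertible over `ℚ`, so
`ρ(s)` is annihilated by the cyclotomic polynomial `Φₚ = (Xᵖ - 1)/(X - 1)`, the minimal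
polynomial of `ζ`. Hence `ℚⁿ` is a vector space over `ℚ[X]/(Φₚ) ≅ ℚ(ζ)` with `X` acting by `ρ(s)`;
a basis over this field is an equivariant isomorphism `ℚⁿ ≅ ℚ(ζ)ᵏ`, and comparing dimensions over
`ℚ` gives `n = k (p - 1)`.
-/

open Polynomial Module Matrix

theorem Polynomial.aeval_cyclotomic_eq_zero_of_pow_eq_one {R A : Type*} [CommRing R] [Ring A]
    [Algebra R A] {p : ℕ} [Fact p.Prime] {x : A} (hx : x ^ p = 1) (hx1 : IsUnit (x - 1)) :
    aeval x (cyclotomic p R) = 0 := by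
  have h : aeval x (cyclotomic p R) * (x - 1) = 0 := by
    simpa [hx] using congrArg (aeval x) (cyclotomic_prime_mul_X_sub_one R p)
  exact (hx1.mul_left_eq_zero).mp h

theorem Matrix.isUnit_map_intCast_sub_one {ι : Type*} [Fintype ι] [DecidableEq ι]
    {A : Matrix ι ι ℤ} (hA : ∀ v : ι → ℤ, A *ᵥ v = v → v = 0) :
    IsUnit (A.map (Int.cast : ℤ → ℚ) - 1) := by
  have hdet : (A - 1).det ≠ 0 := fun h => by
    obtain ⟨v, hv, hv1⟩ := Matrix.exists_mulVec_eq_zero_iff.mpr h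
    exact hv (hA v (by rwa [Matrix.sub_mulVec, Matrix.one_mulVec, sub_eq_zero] at hv1))
  have hmap : A.map (Int.cast : ℤ → ℚ) - 1 = (Int.castRingHom ℚ).mapMatrix (A - 1) := by
    rw [map_sub, map_one]; rfl
  rw [hmap, Matrix.isUnit_iff_isUnit_det, ← RingHom.map_det, isUnit_iff_ne_zero]
  simpa using hdet

theorem Module.End.exists_linearEquiv_pi_adjoinRoot {F V : Type*} [Field F] [AddCommGroup V]
    [Module F V] [FiniteDimensional F V] {P : F[X]} (hP : Irreducible P) (f : Module.End F V)
    (hf : aeval f P = 0) :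
    ∃ k : ℕ, finrank F V = k * P.natDegree ∧ ∃ e : V ≃ₗ[F] (Fin k → AdjoinRoot P),
      ∀ v j, e (f v) j = AdjoinRoot.root P * e v j := by
  have := Fact.mk hP
  let φ : AdjoinRoot P →ₐ[F] Module.End F V := Ideal.Quotient.liftₐ _ (aeval f) fun a ha => by
    obtain ⟨c, rfl⟩ := Ideal.mem_span_singleton.mp ha
    rw [map_mul, hf, zero_mul]
  let : Module (AdjoinRoot P) V := Module.compHom V φ.toRingHom
  have : IsScalarTower F (AdjoinRoot P) V :=
    ⟨fun q c v => show φ (q • c) v = q • φ c v by rw [map_smul]; rfl⟩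
  have : Module.Finite (AdjoinRoot P) V := .of_restrictScalars_finite F _ _
  have hroot : ∀ v, AdjoinRoot.root P • v = f v := fun v => by
    show aeval f X v = f v
    rw [aeval_X]
  refine ⟨finrank (AdjoinRoot P) V, ?_, (finBasis (AdjoinRoot P) V).equivFun.restrictScalars F,
    fun v j => ?_⟩
  · rw [← finrank_mul_finrank F (AdjoinRoot P) V, mul_comm,
      (AdjoinRoot.powerBasis hP.ne_zero).finrank, AdjoinRoot.powerBasis_dim]
  · simp [← hroot]

theorem isPrimitiveRoot_zetaC {p : ℕ} (hp : p ≠ 0) : IsPrimitiveRoot (zetaC p) p :=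
  Complex.isPrimitiveRoot_exp p hp

theorem isIntegral_zetaC {p : ℕ} (hp : 0 < p) : IsIntegral ℚ (zetaC p) :=
  .of_pow hp <| by rw [(isPrimitiveRoot_zetaC hp.ne').pow_eq_one]; exact isIntegral_one

theorem minpoly_zetaC {p : ℕ} (hp : 0 < p) : minpoly ℚ (zetaC p) = cyclotomic p ℚ :=
  (cyclotomic_eq_minpoly_rat (isPrimitiveRoot_zetaC hp.ne') hp).symm

noncomputable def adjoinRootEquivQzeta {p : ℕ} (hp : 0 < p) :
    AdjoinRoot (minpoly ℚ (zetaC p)) ≃ₐ[ℚ] Qzeta p :=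
  minpoly.equivAdjoin (isIntegral_zetaC hp)

theorem adjoinRootEquivQzeta_root {p : ℕ} (hp : 0 < p) :
    adjoinRootEquivQzeta hp (AdjoinRoot.root _) = zetaQ p := by
  change AdjoinRoot.Minpoly.toAdjoin ℚ (zetaC p) (AdjoinRoot.root _) = zetaQ p
  rw [AdjoinRoot.Minpoly.coe_toAdjoin, AdjoinRoot.liftAlgHom_root]
  rfl

theorem ZMod.ofAdd_pow_eq_one {p : ℕ} (s : ZMod p) : Multiplicative.ofAdd s ^ p = 1 := by
  rw [← ofAdd_nsmul, nsmul_eq_mul, ZMod.natCast_self, zero_mul, ofAdd_zero]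

theorem qn_iso_cyclotomic_power_general (p n : ℕ) (hp : p.Prime) (hn : 0 < n)
    (ρ : Multiplicative (ZMod p) →* Matrix.GeneralLinearGroup (Fin n) ℤ)
    (hfree : ∀ g : Multiplicative (ZMod p), g ≠ 1 → ∀ v : Fin n → ℤ,
      (ρ g : Matrix (Fin n) (Fin n) ℤ).mulVec v = v → v = 0)
    (s : ZMod p) (hs : addOrderOf s = p) :
    (∃ k : ℕ, 0 < k ∧ n = k * (p - 1) ∧
      ∃ e : (Fin n → ℚ) ≃ₗ[ℚ] (Fin k → Qzeta p),
        ∀ (v : Fin n → ℚ) (j : Fin k),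
          e (((ρ (Multiplicative.ofAdd s) : Matrix (Fin n) (Fin n) ℤ).map
              (Int.cast : ℤ → ℚ)).mulVec v) j =
            zetaQ p * e v j) ∧
      (p - 1) ∣ n := by
  have := Fact.mk hp
  set B := (ρ (.ofAdd s) : Matrix (Fin n) (Fin n) ℤ).map (Int.cast : ℤ → ℚ)
  have hs_ne_one : Multiplicative.ofAdd s ≠ 1 := fun h => by
    rw [ofAdd_eq_one.mp h, addOrderOf_zero] at hs
    exact hp.one_lt.ne hs
  have hBp : B ^ p = 1 := by
    rw [show B = (Int.castRingHom ℚ).mapMatrix (ρ (.ofAdd s) : Matrix (Fin n) (Fin n) ℤ) from rfl,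
      ← map_pow, ← Units.val_pow_eq_pow_val, ← map_pow, ZMod.ofAdd_pow_eq_one, map_one,
      Units.val_one, map_one]
  have hf : aeval (toLinAlgEquiv' B) (minpoly ℚ (zetaC p)) = 0 := by
    rw [aeval_algEquiv, AlgHom.comp_apply, minpoly_zetaC hp.pos,
      aeval_cyclotomic_eq_zero_of_pow_eq_one hBp (isUnit_map_intCast_sub_one (hfree _ hs_ne_one)),
      map_zero]
  obtain ⟨k, hnk, e, he⟩ :=
    End.exists_linearEquiv_pi_adjoinRoot (minpoly.irreducible (isIntegral_zetaC hp.pos)) _ hf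
  rw [finrank_fin_fun, minpoly_zetaC hp.pos, natDegree_cyclotomic, Nat.totient_prime hp] at hnk
  have hk : 0 < k := Nat.pos_of_ne_zero fun hk => by rw [hk, zero_mul] at hnk; omega
  refine ⟨⟨k, hk, hnk,
    e.trans (LinearEquiv.piCongrRight fun _ => (adjoinRootEquivQzeta hp.pos).toLinearEquiv),
    fun v j => ?_⟩, ⟨k, hnk.trans (mul_comm _ _)⟩⟩
  simp [← toLinAlgEquiv'_apply, he, adjoinRootEquivQzeta_root]

/-- There are a positive integer `k` with `n = k(p-1)` and an isomorphism of `ℚ`-vector spaces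
`ℚⁿ ≅ ℚ(ζ)^k` which is equivariant for the `ℤ/p`-actions, where the generator `s` acts on
`ℚⁿ` by the `ℚ`-linear extension of `ρ(s)` and on each factor `ℚ(ζ)` by multiplication by `ζ`.
In particular `p - 1` divides `n`. -/
theorem qn_iso_cyclotomic_power (p n : ℕ) (hp : p.Prime) (hodd : Odd p) (hn : 0 < n)
    (ρ : Multiplicative (ZMod p) →* Matrix.GeneralLinearGroup (Fin n) ℤ)
    (hfree : ∀ g : Multiplicative (ZMod p), g ≠ 1 → ∀ v : Fin n → ℤ,
      (ρ g : Matrix (Fin n) (Fin n) ℤ).mulVec v = v → v = 0)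
    (s : ZMod p) (hs : addOrderOf s = p) :
    (∃ k : ℕ, 0 < k ∧ n = k * (p - 1) ∧
      ∃ e : (Fin n → ℚ) ≃ₗ[ℚ] (Fin k → Qzeta p),
        ∀ (v : Fin n → ℚ) (j : Fin k),
          e (((ρ (Multiplicative.ofAdd s) : Matrix (Fin n) (Fin n) ℤ).map
              (Int.cast : ℤ → ℚ)).mulVec v) j =
            zetaQ p * e v j) ∧
      (p - 1) ∣ n :=
  qn_iso_cyclotomic_power_general p n hp hn ρ hfree s hs
end

section
/- Every element of Γ whose ℤ/p-component is nontrivial has order exactly p; that is, if γ = (u, g) ∈ Γ with g ≠ 1, then γ^p = 1 and γ ≠ 1. -/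
open Multiplicative

/-- The action of `GL n ℤ` on `ℤⁿ`, as a homomorphism
`Multiplicative (ZMod p) →* MulAut (Multiplicative (Fin n → ℤ))`. -/
def matAutHom {p n : ℕ} (ρ : Multiplicative (ZMod p) →* Matrix.GeneralLinearGroup (Fin n) ℤ) :
    Multiplicative (ZMod p) →* MulAut (Multiplicative (Fin n → ℤ)) where
  toFun g :=
    { toFun := fun v => Multiplicative.ofAdd ((ρ g : Matrix (Fin n) (Fin n) ℤ).mulVec v.toAdd)
      invFun := fun v =>
        Multiplicative.ofAdd ((((ρ g)⁻¹ : Matrix.GeneralLinearGroup (Fin n) ℤ) :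
          Matrix (Fin n) (Fin n) ℤ).mulVec v.toAdd)
      left_inv := fun v => by simp [Matrix.mulVec_mulVec]
      right_inv := fun v => by simp [Matrix.mulVec_mulVec]
      map_mul' := fun u v => by simp [Matrix.mulVec_add] }
  map_one' := by ext v; simp
  map_mul' g h := by ext v; simp [Matrix.mulVec_mulVec]

/-- The group `Γ = ℤⁿ ⋊_ρ ℤ/p`. -/
abbrev Gamma {p n : ℕ} (ρ : Multiplicative (ZMod p) →* Matrix.GeneralLinearGroup (Fin n) ℤ) :
    Type :=
  SemidirectProduct (Multiplicative (Fin n → ℤ)) (Multiplicative (ZMod p)) (matAutHom ρ)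

/-! The `p`-th power of `γ = (u, g)` is `(N u, g ^ p) = (N u, 1)`, where `N u` is the norm of `u`
under `ρ g`. Since `γ` commutes with `γ ^ p`, the norm `N u` is fixed by `ρ g`, so it vanishes by
freeness of the action. -/

namespace SemidirectProduct

variable {N G : Type*} [CommGroup N] [Group G] {φ : G →* MulAut N}

theorem right_pow (x : N ⋊[φ] G) (k : ℕ) : (x ^ k).right = x.right ^ k :=
  map_pow rightHom x k

theorem apply_right_left_pow_of_right_pow_eq_one (x : N ⋊[φ] G) {k : ℕ}
    (hk : x.right ^ k = 1) : φ x.right (x ^ k).left = (x ^ k).left := by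
  have hcomm := congrArg left (Commute.self_pow x k).eq
  rw [mul_left, mul_left, right_pow, hk, map_one, MulAut.one_apply, mul_comm] at hcomm
  exact mul_right_cancel hcomm

theorem pow_eq_one_of_right_pow_eq_one (x : N ⋊[φ] G) {k : ℕ} (hk : x.right ^ k = 1)
    (hfix : ∀ n : N, φ x.right n = n → n = 1) : x ^ k = 1 :=
  SemidirectProduct.ext (hfix _ (x.apply_right_left_pow_of_right_pow_eq_one hk))
    (by rw [right_pow, hk, one_right])

end SemidirectProduct

theorem eq_one_of_matAutHom_apply_eq_self {p n : ℕ}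
    {ρ : Multiplicative (ZMod p) →* Matrix.GeneralLinearGroup (Fin n) ℤ}
    {h : Multiplicative (ZMod p)}
    (hfree : ∀ v : Fin n → ℤ, (ρ h : Matrix (Fin n) (Fin n) ℤ).mulVec v = v → v = 0)
    (v : Multiplicative (Fin n → ℤ)) (hv : matAutHom ρ h v = v) : v = 1 :=
  toAdd_eq_zero.mp (hfree v.toAdd (congrArg toAdd hv))

theorem ZMod.ofAdd_pow_self {p : ℕ} (g : ZMod p) : (ofAdd g : Multiplicative (ZMod p)) ^ p = 1 := by
  rw [← ofAdd_nsmul, nsmul_eq_mul, ZMod.natCast_self, zero_mul, ofAdd_zero]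

theorem order_p_of_nontrivial_component_general (p n : ℕ)
    (ρ : Multiplicative (ZMod p) →* Matrix.GeneralLinearGroup (Fin n) ℤ)
    (hfree : ∀ g : Multiplicative (ZMod p), g ≠ 1 → ∀ v : Fin n → ℤ,
      (ρ g : Matrix (Fin n) (Fin n) ℤ).mulVec v = v → v = 0)
    (u : Fin n → ℤ) (g : ZMod p) (hg : g ≠ 0) :
    (⟨Multiplicative.ofAdd u, Multiplicative.ofAdd g⟩ : Gamma ρ) ^ p = 1 ∧
      (⟨Multiplicative.ofAdd u, Multiplicative.ofAdd g⟩ : Gamma ρ) ≠ 1 := by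
  have hg' : (ofAdd g : Multiplicative (ZMod p)) ≠ 1 := ofAdd_eq_one.not.mpr hg
  constructor
  · exact SemidirectProduct.pow_eq_one_of_right_pow_eq_one _ (ZMod.ofAdd_pow_self g)
      (eq_one_of_matAutHom_apply_eq_self (hfree _ hg'))
  · exact fun h => hg' (congrArg SemidirectProduct.right h)

/-- Every element of `Γ = ℤⁿ ⋊_ρ ℤ/p` whose `ℤ/p`-component is nontrivial has order
exactly `p`. -/
theorem order_p_of_nontrivial_component (p n : ℕ) (hp : p.Prime) (hodd : Odd p) (hn : 0 < n)
    (ρ : Multiplicative (ZMod p) →* Matrix.GeneralLinearGroup (Fin n) ℤ)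
    (hfree : ∀ g : Multiplicative (ZMod p), g ≠ 1 → ∀ v : Fin n → ℤ,
      (ρ g : Matrix (Fin n) (Fin n) ℤ).mulVec v = v → v = 0)
    (u : Fin n → ℤ) (g : ZMod p) (hg : g ≠ 0) :
    (⟨Multiplicative.ofAdd u, Multiplicative.ofAdd g⟩ : Gamma ρ) ^ p = 1 ∧
      (⟨Multiplicative.ofAdd u, Multiplicative.ofAdd g⟩ : Gamma ρ) ≠ 1 :=
  order_p_of_nontrivial_component_general p n ρ hfree u g hg
end

section
/- Every nontrivial finite subgroup P of Γ is cyclic of order p. -/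
open Multiplicative

/-- Every nontrivial finite subgroup of `Γ = ℤⁿ ⋊_ρ ℤ/p` is cyclic of order `p`. -/
theorem nontrivial_finite_subgroup_cyclic_of_order_p (p n : ℕ) (hp : p.Prime) (hodd : Odd p)
    (hn : 0 < n)
    (ρ : Multiplicative (ZMod p) →* Matrix.GeneralLinearGroup (Fin n) ℤ)
    (hfree : ∀ g : Multiplicative (ZMod p), g ≠ 1 → ∀ v : Fin n → ℤ,
      (ρ g : Matrix (Fin n) (Fin n) ℤ).mulVec v = v → v = 0)
    (P : Subgroup (Gamma ρ)) (hP : P ≠ ⊥) (hPfin : Finite P) :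
    IsCyclic P ∧ Nat.card P = p := by

  haveI : Fact p.Prime := ⟨hp⟩
  set f : P →* Multiplicative (ZMod p) := SemidirectProduct.rightHom.comp P.subtype with hf
  have hinj : Function.Injective f := by
    rw [← MonoidHom.ker_eq_bot_iff, eq_bot_iff]
    intro x hx
    have hr : (x : Gamma ρ).right = 1 := hx
    have hxl : (x : Gamma ρ) = SemidirectProduct.inl (x : Gamma ρ).left := by
      ext <;> simp [hr]
    have hk : x ^ orderOf x = 1 := pow_orderOf_eq_one x
    have hkpos : 0 < orderOf x := orderOf_pos x
    have : (x : Gamma ρ) ^ orderOf x = 1 := by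
      exact_mod_cast congrArg (Subtype.val) hk
    rw [hxl, ← map_pow, ← map_one (SemidirectProduct.inl (φ := matAutHom ρ))] at this
    have hv := SemidirectProduct.inl_injective this
    have hz : (orderOf x) • toAdd ((x : Gamma ρ).left) = 0 := by
      have := congrArg toAdd hv
      simpa [toAdd_pow] using this
    have : toAdd ((x : Gamma ρ).left) = 0 :=
      (smul_eq_zero.mp hz).resolve_left hkpos.ne'
    have hx1 : (x : Gamma ρ) = 1 := by
      rw [hxl]
      have : (x : Gamma ρ).left = 1 := by
        simpa using congrArg Multiplicative.ofAdd this
      rw [this, map_one]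
    exact Subtype.ext hx1
  have hcard : Nat.card P ∣ p := by
    have h1 : Nat.card P = Nat.card f.range := Nat.card_congr (Equiv.ofInjective f hinj)
    rw [h1]
    have := Subgroup.card_subgroup_dvd_card f.range
    simpa [Nat.card_eq_fintype_card] using this
  haveI : Nontrivial P := (Subgroup.nontrivial_iff_ne_bot P).mpr hP
  have hne1 : Nat.card P ≠ 1 := Finite.one_lt_card.ne'
  have hcp : Nat.card P = p := ((Nat.Prime.eq_one_or_self_of_dvd hp _ hcard).resolve_left hne1)
  exact ⟨isCyclic_of_prime_card hcp, hcp⟩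
end

section
/- The cokernel of the endomorphism ρ(s) - id : ℤ^n → ℤ^n is isomorphic as an abelian group to (ℤ/p)^k. -/
/-!
Put `A = ρ(s)`. Since `A ^ p = 1` and `A - 1` is injective, `A` is a root of the cyclotomic
polynomial `Φ_p`. Then `Φ_p(X) • 1 = Φ_p(X) • 1 - Φ_p(A)` is a multiple of the characteristic
matrix `X • 1 - A`, so `charpoly A ∣ Φ_p ^ n`; as `Φ_p` is irreducible of degree `p - 1`, this
forces `charpoly A = Φ_p ^ k`, whence `det (1 - A) = Φ_p(1) ^ k = p ^ k`, the order of the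
cokernel. Finally `X - 1` divides `Φ_p - p`, so `p` kills the cokernel, which is therefore an
`𝔽_p`-vector space of dimension `k`.
-/

open Matrix Polynomial

theorem LinearMap.natAbs_det_eq_natCard_quotient_range {M : Type*} [AddCommGroup M]
    [Module.Free ℤ M] [Module.Finite ℤ M] {f : M →ₗ[ℤ] M} (hf : Function.Injective f) :
    (LinearMap.det f).natAbs = Nat.card (M ⧸ LinearMap.range f) :=
  Submodule.natAbs_det_equiv (LinearMap.range f) (LinearEquiv.ofInjective f hf)

theorem Matrix.natCard_quotient_range_mulVecLin {ι : Type*} [Fintype ι] [DecidableEq ι]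
    {B : Matrix ι ι ℤ} (hB : B.det ≠ 0) :
    Nat.card ((ι → ℤ) ⧸ LinearMap.range B.mulVecLin) = B.det.natAbs := by
  rw [← LinearMap.natAbs_det_eq_natCard_quotient_range (B.mulVec_injective_of_det_ne_zero hB),
    ← toLin'_apply', LinearMap.det_toLin']

theorem Matrix.charpoly_dvd_pow_of_aeval_eq_zero {R ι : Type*} [CommRing R] [Fintype ι]
    [DecidableEq ι] {M : Matrix ι ι R} {q : R[X]} (hq : aeval M q = 0) :
    M.charpoly ∣ q ^ Fintype.card ι := by
  have hdvd : X - C X ∣ q.map C - C q := by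
    simpa [eval_map, eval₂_C_X] using X_sub_C_dvd_sub_C_eval (a := (X : R[X])) (p := q.map C)
  have hM : aeval (C.mapMatrix M : Matrix ι ι R[X]) (q.map C) = 0 := by
    rw [← algebraMap_eq, aeval_map_algebraMap]
    have := aeval_algHom_apply (Algebra.ofId R R[X]).mapMatrix M q
    rwa [hq, map_zero] at this
  have := _root_.map_dvd (aeval (C.mapMatrix M : Matrix ι ι R[X])) hdvd
  rw [map_sub, map_sub, hM, aeval_X, aeval_C, zero_sub, dvd_neg, ← neg_dvd, neg_sub] at this
  simpa [charpoly, charmatrix, algebraMap_eq_diagonal, det_diagonal, Pi.algebraMap_def] using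
    _root_.map_dvd detMonoidHom this

theorem Polynomial.aeval_cyclotomic_prime_eq_zero_of_pow_eq_one {R : Type*} [Ring R] {p : ℕ}
    [Fact p.Prime] {a : R} (ha : IsLeftRegular (a - 1)) (hp : a ^ p = 1) :
    aeval a (cyclotomic p ℤ) = 0 := by
  have : (a - 1) * ∑ i ∈ Finset.range p, a ^ i = (a - 1) * 0 := by
    rw [mul_geom_sum, hp, sub_self, mul_zero]
  simpa [cyclotomic_prime] using ha this

theorem Polynomial.sub_one_dvd_prime_of_aeval_cyclotomic_eq_zero {R : Type*} [Ring R] {p : ℕ}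
    [Fact p.Prime] {a : R} (ha : aeval a (cyclotomic p ℤ) = 0) : a - 1 ∣ (p : R) := by
  have := _root_.map_dvd (aeval a) (X_sub_C_dvd_sub_C_eval (a := (1 : ℤ)) (p := cyclotomic p ℤ))
  simpa [ha, eval_one_cyclotomic_prime] using this

theorem Matrix.charpoly_eq_cyclotomic_prime_pow {ι : Type*} [Fintype ι] [DecidableEq ι]
    {p k : ℕ} [hp : Fact p.Prime] {A : Matrix ι ι ℤ} (hA : aeval A (cyclotomic p ℤ) = 0)
    (hk : Fintype.card ι = k * (p - 1)) : A.charpoly = cyclotomic p ℤ ^ k := by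
  have hprime : Prime (cyclotomic p ℤ) := (cyclotomic.irreducible hp.out.pos).prime
  obtain ⟨i, -, hi⟩ := (dvd_prime_pow hprime _).mp (charpoly_dvd_pow_of_aeval_eq_zero hA)
  have hAi : A.charpoly = cyclotomic p ℤ ^ i :=
    eq_of_monic_of_associated A.charpoly_monic ((cyclotomic.monic p ℤ).pow i) hi
  have hdeg := congrArg natDegree hAi
  rw [charpoly_natDegree_eq_dim, natDegree_pow, natDegree_cyclotomic, Nat.totient_prime hp.out,
    hk] at hdeg
  rw [hAi, Nat.eq_of_mul_eq_mul_right (Nat.sub_pos_of_lt hp.out.one_lt) hdeg]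

theorem Matrix.det_one_sub_eq_prime_pow {ι : Type*} [Fintype ι] [DecidableEq ι]
    {p k : ℕ} [Fact p.Prime] {A : Matrix ι ι ℤ} (hA : aeval A (cyclotomic p ℤ) = 0)
    (hk : Fintype.card ι = k * (p - 1)) : (1 - A).det = p ^ k := by
  rw [← map_one (scalar ι), ← eval_charpoly, charpoly_eq_cyclotomic_prime_pow hA hk, eval_pow,
    eval_one_cyclotomic_prime]

theorem ZMod.nonempty_addEquiv_pi_of_natCard_eq {G : Type*} [AddCommGroup G] [Finite G]
    {p k : ℕ} [hp : Fact p.Prime] [Module (ZMod p) G] (hcard : Nat.card G = p ^ k) :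
    Nonempty (G ≃+ (Fin k → ZMod p)) := by
  have : Module.Finite (ZMod p) G := .of_finite
  have hrank : Module.finrank (ZMod p) G = Module.finrank (ZMod p) (Fin k → ZMod p) := by
    rw [Module.finrank_fin_fun]
    apply Nat.pow_right_injective hp.out.two_le
    have := Module.natCard_eq_pow_finrank (K := ZMod p) (V := G)
    rw [Nat.card_zmod] at this
    exact this.symm.trans hcard
  exact (FiniteDimensional.nonempty_linearEquiv_of_finrank_eq hrank).map LinearEquiv.toAddEquiv

theorem Matrix.nonempty_addEquiv_quotient_range_sub_one {ι : Type*} [Fintype ι] [DecidableEq ι]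
    {p k : ℕ} [hp : Fact p.Prime] {A : Matrix ι ι ℤ} (hA : aeval A (cyclotomic p ℤ) = 0)
    (hk : Fintype.card ι = k * (p - 1)) :
    Nonempty (((ι → ℤ) ⧸ LinearMap.range (A - 1).mulVecLin) ≃+ (Fin k → ZMod p)) := by
  have hpk : p ^ k ≠ 0 := pow_ne_zero k hp.out.ne_zero
  have hdet : (A - 1).det.natAbs = p ^ k := by
    rw [← neg_sub, det_neg, det_one_sub_eq_prime_pow hA hk]
    simp [Int.natAbs_mul, Int.natAbs_pow]
  have hcard : Nat.card ((ι → ℤ) ⧸ LinearMap.range (A - 1).mulVecLin) = p ^ k := by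
    rw [natCard_quotient_range_mulVecLin, hdet]
    exact Int.natAbs_ne_zero.mp (hdet ▸ hpk)
  obtain ⟨B, hB⟩ := sub_one_dvd_prime_of_aeval_cyclotomic_eq_zero hA
  have htors (x : (ι → ℤ) ⧸ LinearMap.range (A - 1).mulVecLin) : p • x = 0 := by
    induction x using Submodule.Quotient.induction_on with | H v => ?_
    rw [← Submodule.Quotient.mk_smul, Submodule.Quotient.mk_eq_zero]
    exact ⟨B *ᵥ v, by rw [mulVecLin_apply, mulVec_mulVec, ← hB]; simp⟩
  have : Finite ((ι → ℤ) ⧸ LinearMap.range (A - 1).mulVecLin) :=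
    Nat.finite_of_card_ne_zero (hcard ▸ hpk)
  let := AddCommGroup.zmodModule htors
  exact ZMod.nonempty_addEquiv_pi_of_natCard_eq hcard

theorem cokernel_iso_general (p n k : ℕ) (hp : p.Prime)
    (hn : n = k * (p - 1))
    (ρ : Multiplicative (ZMod p) →* Matrix.GeneralLinearGroup (Fin n) ℤ)
    (hfree : ∀ g : Multiplicative (ZMod p), g ≠ 1 → ∀ v : Fin n → ℤ,
      (ρ g : Matrix (Fin n) (Fin n) ℤ).mulVec v = v → v = 0)
    (s : ZMod p) (hs : addOrderOf s = p) :
    Nonempty (((Fin n → ℤ) ⧸ LinearMap.range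
        (Matrix.mulVecLin
          ((ρ (Multiplicative.ofAdd s) : Matrix (Fin n) (Fin n) ℤ) - 1))) ≃+
      (Fin k → ZMod p)) := by
  have := Fact.mk hp
  set A : Matrix (Fin n) (Fin n) ℤ := (ρ (Multiplicative.ofAdd s) : Matrix (Fin n) (Fin n) ℤ)
  have hs_ne_one : Multiplicative.ofAdd s ≠ 1 := by
    intro h
    rw [ofAdd_eq_one.mp h, addOrderOf_zero] at hs
    exact hp.one_lt.ne hs
  have hAp : A ^ p = 1 := by
    rw [← Units.val_pow_eq_pow_val, ← map_pow, ← ofAdd_nsmul, nsmul_eq_mul, ZMod.natCast_self,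
      zero_mul, ofAdd_zero, map_one, Units.val_one]
  have hdet : (A - 1).det ≠ 0 := by
    rw [Ne, ← exists_mulVec_eq_zero_iff]
    rintro ⟨v, hv0, hv⟩
    rw [sub_mulVec, one_mulVec, sub_eq_zero] at hv
    exact hv0 (hfree _ hs_ne_one v hv)
  have hregular : IsLeftRegular (A - 1) :=
    (isRegular_of_isLeftRegular_det (IsRegular.of_ne_zero hdet).left).left
  exact nonempty_addEquiv_quotient_range_sub_one
    (aeval_cyclotomic_prime_eq_zero_of_pow_eq_one hregular hAp) (by rw [Fintype.card_fin, hn])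

/-- The cokernel of `ρ(s) - id : ℤⁿ → ℤⁿ` is isomorphic to `(ℤ/p)^k` as an abelian group. -/
theorem cokernel_iso (p n k : ℕ) (hp : p.Prime) (hodd : Odd p) (hk : 0 < k)
    (hn : n = k * (p - 1))
    (ρ : Multiplicative (ZMod p) →* Matrix.GeneralLinearGroup (Fin n) ℤ)
    (hfree : ∀ g : Multiplicative (ZMod p), g ≠ 1 → ∀ v : Fin n → ℤ,
      (ρ g : Matrix (Fin n) (Fin n) ℤ).mulVec v = v → v = 0)
    (s : ZMod p) (hs : addOrderOf s = p) :
    Nonempty (((Fin n → ℤ) ⧸ LinearMap.range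
        (Matrix.mulVecLin
          ((ρ (Multiplicative.ofAdd s) : Matrix (Fin n) (Fin n) ℤ) - 1))) ≃+
      (Fin k → ZMod p)) :=
  cokernel_iso_general p n k hp hn ρ hfree s hs
end

section
/- The map sending the class of u ∈ ℤ^n in the cokernel of ρ(s) - id : ℤ^n → ℤ^n to the conjugacy class of the cyclic subgroup of Γ generated by the element (u, s) is a well-defined bijection from coker(ρ(s) - id) onto the set 𝒫 of conjugacy classes of nontrivial finite subgroups of Γ. -/
open Multiplicative

/-- Two subgroups of a group are conjugate. -/
def ConjSub {G : Type*} [Group G] (P Q : Subgroup G) : Prop :=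
  ∃ γ : G, Subgroup.map (MulAut.conj γ).toMonoidHom P = Q

/-!
Conjugating `(u, s)` by `(w, t)` gives `(w + ρ(t) u - ρ(s) w, s)`, and `ρ(t) u - u` lies in
the image of `ρ(s) - 1` because `ρ(t)` is a power of `ρ(s)`; so `(u, s)` and `(v, s)` are
conjugate exactly when `u ≡ v` modulo that image. Freeness forces `(u, s) ^ p = 1`: this power
lies in `ℤⁿ` and commutes with `(u, s)`, hence is fixed by `ρ(s)`. Both `(u, s)` and its image
`s` thus have order `p`, so a conjugate of `(u, s)` lying in `⟨(v, s)⟩` over `s` must be `(v, s)`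
itself.
Conversely a finite subgroup meets the torsion-free `ℤⁿ` trivially, hence embeds in `ℤ/p`, and
if nontrivial it is generated by its element lying over `s`.
-/

namespace SemidirectProduct

theorem eq_one_of_isOfFinOrder_of_right_eq_one {N G : Type*} [Group N] [IsMulTorsionFree N]
    [Group G] {φ : G →* MulAut N} {x : N ⋊[φ] G} (hx : IsOfFinOrder x) (h : x.right = 1) :
    x = 1 := by
  have hinl : inl x.left = x := by simpa [h] using inl_left_mul_inr_right x
  have hleft : x.left = 1 := (inl_injective.isOfFinOrder_iff.mp (hinl ▸ hx)).eq_one'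
  rw [← hinl, hleft, map_one]

theorem right_conj {N G : Type*} [Group N] [CommGroup G] {φ : G →* MulAut N} (γ x : N ⋊[φ] G) :
    (MulAut.conj γ x).right = x.right := by
  simp [mul_inv_cancel_comm]

theorem apply_left_eq_of_commute {N G : Type*} [CommGroup N] [Group G] {φ : G →* MulAut N}
    {x y : N ⋊[φ] G} (hy : y.right = 1) (hxy : Commute x y) : φ x.right y.left = y.left := by
  have h := congrArg left hxy.eq
  simp only [mul_left, hy, map_one, MulAut.one_apply] at h
  simpa [mul_comm y.left] using h

end SemidirectProduct

theorem Subgroup.zpowers_eq_of_map_mem_zpowers {G H : Type*} [Group G] [Group H] {f : G →* H}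
    {P : Subgroup G} (hker : ∀ y ∈ P, f y = 1 → y = 1) {x : G} (hx : x ∈ P)
    (hgen : ∀ y ∈ P, f y ∈ Subgroup.zpowers (f x)) : Subgroup.zpowers x = P := by
  refine le_antisymm (Subgroup.zpowers_le.mpr hx) fun y hy => ?_
  obtain ⟨k, hk⟩ := Subgroup.mem_zpowers_iff.mp (hgen y hy)
  have : y * (x ^ k)⁻¹ = 1 :=
    hker _ (mul_mem hy (inv_mem (zpow_mem hx k))) (by simp [hk])
  rw [mul_inv_eq_one.mp this]
  exact zpow_mem (Subgroup.mem_zpowers x) k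

theorem Matrix.range_mulVecLin_pow_sub_one_le {n R : Type*} [Fintype n] [DecidableEq n]
    [CommRing R] (A : Matrix n n R) (j : ℕ) :
    LinearMap.range (A ^ j - 1).mulVecLin ≤ LinearMap.range (A - 1).mulVecLin := by
  rw [← mul_geom_sum, Matrix.mulVecLin_mul]
  exact LinearMap.range_comp_le_range _ _

theorem MonoidHom.zpow_eq_zpow_of_orderOf_map_eq {G H : Type*} [Group G] [Group H] {f : G →* H}
    {x : G} (h : orderOf (f x) = orderOf x) {j k : ℤ} (hjk : f x ^ j = f x ^ k) :
    x ^ j = x ^ k := by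
  rwa [zpow_eq_zpow_iff_modEq, ← h, ← zpow_eq_zpow_iff_modEq]

open Matrix

@[simp]
theorem matAutHom_apply {p n : ℕ}
    (ρ : Multiplicative (ZMod p) →* Matrix.GeneralLinearGroup (Fin n) ℤ)
    (g : Multiplicative (ZMod p)) (v : Multiplicative (Fin n → ℤ)) :
    matAutHom ρ g v = ofAdd ((ρ g : Matrix (Fin n) (Fin n) ℤ) *ᵥ v.toAdd) := rfl

namespace Gamma

variable {p n : ℕ} {ρ : Multiplicative (ZMod p) →* Matrix.GeneralLinearGroup (Fin n) ℤ}

theorem conj_mk (w u : Fin n → ℤ) (t s : ZMod p) :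
    MulAut.conj (⟨ofAdd w, ofAdd t⟩ : Gamma ρ) ⟨ofAdd u, ofAdd s⟩ =
      ⟨ofAdd (w + (ρ (ofAdd t) : Matrix (Fin n) (Fin n) ℤ) *ᵥ u -
        (ρ (ofAdd s) : Matrix (Fin n) (Fin n) ℤ) *ᵥ w), ofAdd s⟩ := by
  rw [MulAut.conj_apply]
  ext : 1
  · simp only [SemidirectProduct.mul_left, SemidirectProduct.inv_left,
      SemidirectProduct.mul_right, matAutHom_apply, toAdd_inv, toAdd_ofAdd]
    rw [mulVec_mulVec, ← Units.val_mul, ← map_mul ρ, mul_inv_cancel_comm, mulVec_neg,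
      ← ofAdd_add, ← ofAdd_add, sub_eq_add_neg]
  · simp [mul_inv_cancel_comm]

variable {s : ZMod p}

theorem mk_pow_eq_one
    (hfix : ∀ v : Fin n → ℤ, (ρ (ofAdd s) : Matrix (Fin n) (Fin n) ℤ) *ᵥ v = v → v = 0)
    (u : Fin n → ℤ) : (⟨ofAdd u, ofAdd s⟩ : Gamma ρ) ^ p = 1 := by
  set x : Gamma ρ := ⟨ofAdd u, ofAdd s⟩
  have hright : (x ^ p).right = 1 := by
    rw [← SemidirectProduct.rightHom_eq_right, map_pow, SemidirectProduct.rightHom_eq_right,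
      ← ofAdd_nsmul, nsmul_eq_mul, ZMod.natCast_self, zero_mul, ofAdd_zero]
  have hfixed := SemidirectProduct.apply_left_eq_of_commute hright ((Commute.refl x).pow_right p)
  exact SemidirectProduct.ext (congrArg ofAdd (hfix _ (congrArg toAdd hfixed))) hright

theorem orderOf_mk
    (hfix : ∀ v : Fin n → ℤ, (ρ (ofAdd s) : Matrix (Fin n) (Fin n) ℤ) *ᵥ v = v → v = 0)
    (hs : addOrderOf s = p) (u : Fin n → ℤ) : orderOf (⟨ofAdd u, ofAdd s⟩ : Gamma ρ) = p :=
  Nat.dvd_antisymm (orderOf_dvd_of_pow_eq_one (mk_pow_eq_one hfix u))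
    (by simpa [hs] using
      orderOf_map_dvd SemidirectProduct.rightHom (⟨ofAdd u, ofAdd s⟩ : Gamma ρ))

theorem mulVec_sub_mem_range [Fact p.Prime] (hs : s ≠ 0) (g : Multiplicative (ZMod p))
    (u : Fin n → ℤ) :
    (ρ g : Matrix (Fin n) (Fin n) ℤ) *ᵥ u - u ∈
      LinearMap.range (mulVecLin ((ρ (ofAdd s) : Matrix (Fin n) (Fin n) ℤ) - 1)) := by
  have hcard : Nat.card (Multiplicative (ZMod p)) = p := by simp
  obtain ⟨j, rfl⟩ := mem_powers_of_prime_card hcard (g' := g) (ofAdd_eq_one.not.mpr hs)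
  exact range_mulVecLin_pow_sub_one_le _ j ⟨u, by simp⟩

theorem exists_conj_mk_eq_mk_iff [Fact p.Prime] (hs : s ≠ 0) (u v : Fin n → ℤ) :
    (∃ γ : Gamma ρ, MulAut.conj γ ⟨ofAdd u, ofAdd s⟩ = ⟨ofAdd v, ofAdd s⟩) ↔
      u - v ∈ LinearMap.range (mulVecLin ((ρ (ofAdd s) : Matrix (Fin n) (Fin n) ℤ) - 1)) := by
  constructor
  · rintro ⟨⟨w, t⟩, h⟩
    rw [show (⟨w, t⟩ : Gamma ρ) = ⟨ofAdd w.toAdd, ofAdd t.toAdd⟩ from rfl, conj_mk] at h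
    have hv := congrArg (toAdd ∘ SemidirectProduct.left) h
    simp only [Function.comp_apply, toAdd_ofAdd, ofAdd_toAdd] at hv
    have huv : u - v = mulVecLin ((ρ (ofAdd s) : Matrix (Fin n) (Fin n) ℤ) - 1) w.toAdd -
        ((ρ t : Matrix (Fin n) (Fin n) ℤ) *ᵥ u - u) := by
      rw [← hv, mulVecLin_apply, sub_mulVec, one_mulVec]
      abel
    rw [huv]
    exact sub_mem (LinearMap.mem_range_self _ _) (mulVec_sub_mem_range hs t u)
  · rintro ⟨w, hw⟩
    rw [mulVecLin_apply, sub_mulVec, one_mulVec] at hw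
    refine ⟨⟨ofAdd w, 1⟩, ?_⟩
    rw [← ofAdd_zero, conj_mk, ofAdd_zero, map_one, Units.val_one, one_mulVec]
    congr 2
    linear_combination -hw

theorem conjSub_zpowers_mk_iff
    (hfix : ∀ v : Fin n → ℤ, (ρ (ofAdd s) : Matrix (Fin n) (Fin n) ℤ) *ᵥ v = v → v = 0)
    (hs : addOrderOf s = p) (u v : Fin n → ℤ) :
    ConjSub (Subgroup.zpowers (⟨ofAdd u, ofAdd s⟩ : Gamma ρ))
        (Subgroup.zpowers ⟨ofAdd v, ofAdd s⟩) ↔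
      ∃ γ : Gamma ρ, MulAut.conj γ ⟨ofAdd u, ofAdd s⟩ = ⟨ofAdd v, ofAdd s⟩ := by
  simp only [ConjSub, MonoidHom.map_zpowers, MulEquiv.coe_toMonoidHom]
  refine exists_congr fun γ => ⟨fun h => ?_, fun h => by rw [h]⟩
  obtain ⟨k, hk⟩ := Subgroup.mem_zpowers_iff.mp (h ▸ Subgroup.mem_zpowers _)
  rw [← hk]
  nth_rewrite 2 [← zpow_one (⟨ofAdd v, ofAdd s⟩ : Gamma ρ)]
  refine MonoidHom.zpow_eq_zpow_of_orderOf_map_eq (f := SemidirectProduct.rightHom) ?_ ?_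
  · rw [orderOf_mk hfix hs]
    simp [hs]
  · rw [← map_zpow, hk, zpow_one, SemidirectProduct.rightHom_eq_right,
      SemidirectProduct.right_conj]

theorem exists_zpowers_mk_eq [Fact p.Prime] (hs : s ≠ 0) (P : Subgroup (Gamma ρ)) [Finite P]
    (hP : P ≠ ⊥) : ∃ u : Fin n → ℤ, Subgroup.zpowers (⟨ofAdd u, ofAdd s⟩ : Gamma ρ) = P := by
  have hcard : Nat.card (Multiplicative (ZMod p)) = p := by simp
  have hker : ∀ y ∈ P, y.right = 1 → y = 1 := fun y hy =>
    SemidirectProduct.eq_one_of_isOfFinOrder_of_right_eq_one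
      (Submonoid.isOfFinOrder_coe.mpr (isOfFinOrder_of_finite (⟨y, hy⟩ : P)))
  obtain ⟨y, hyP, hy1⟩ := P.bot_or_exists_ne_one.resolve_left hP
  obtain ⟨k, hk⟩ := Subgroup.mem_zpowers_iff.mp
    (mem_zpowers_of_prime_card hcard (g' := ofAdd s) fun h => hy1 (hker y hyP h))
  have hxs : (y ^ k).right = ofAdd s := by
    rw [← hk, ← SemidirectProduct.rightHom_eq_right, map_zpow]
  have hx : (⟨ofAdd (y ^ k).left.toAdd, ofAdd s⟩ : Gamma ρ) = y ^ k :=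
    SemidirectProduct.ext rfl hxs.symm
  refine ⟨_, hx ▸ Subgroup.zpowers_eq_of_map_mem_zpowers (f := SemidirectProduct.rightHom) hker
    (zpow_mem hyP k) fun z _ => ?_⟩
  rw [SemidirectProduct.rightHom_eq_right, hxs]
  exact mem_zpowers_of_prime_card hcard (ofAdd_eq_one.not.mpr hs)

end Gamma

open Gamma in
theorem coker_bijects_onto_conjugacy_classes_general (p n : ℕ) (hp : p.Prime)
    (ρ : Multiplicative (ZMod p) →* Matrix.GeneralLinearGroup (Fin n) ℤ)
    (hfree : ∀ g : Multiplicative (ZMod p), g ≠ 1 → ∀ v : Fin n → ℤ,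
      (ρ g : Matrix (Fin n) (Fin n) ℤ).mulVec v = v → v = 0)
    (s : ZMod p) (hs : addOrderOf s = p) :
    (∀ u v : Fin n → ℤ,
      u - v ∈ LinearMap.range
          (Matrix.mulVecLin ((ρ (Multiplicative.ofAdd s) : Matrix (Fin n) (Fin n) ℤ) - 1)) ↔
        ConjSub
          (Subgroup.zpowers (⟨Multiplicative.ofAdd u, Multiplicative.ofAdd s⟩ : Gamma ρ))
          (Subgroup.zpowers (⟨Multiplicative.ofAdd v, Multiplicative.ofAdd s⟩ : Gamma ρ))) ∧
    (∀ P : Subgroup (Gamma ρ), P ≠ ⊥ → Finite P →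
      ∃ u : Fin n → ℤ,
        ConjSub
          (Subgroup.zpowers (⟨Multiplicative.ofAdd u, Multiplicative.ofAdd s⟩ : Gamma ρ)) P) := by
  have := Fact.mk hp
  have hs0 : s ≠ 0 := by
    rintro rfl
    exact hp.one_lt.ne (addOrderOf_zero (G := ZMod p) ▸ hs)
  have hfix := hfree (ofAdd s) (ofAdd_eq_one.not.mpr hs0)
  refine ⟨fun u v => ?_, fun P hP _ => ?_⟩
  · rw [conjSub_zpowers_mk_iff hfix hs, exists_conj_mk_eq_mk_iff hs0]
  · obtain ⟨u, hu⟩ := exists_zpowers_mk_eq hs0 P hP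
    exact ⟨u, 1, by rw [map_one, hu]; exact P.map_id⟩

/-- The map sending the class of `u ∈ ℤⁿ` in `coker(ρ(s) - id)` to the conjugacy class of the
cyclic subgroup of `Γ` generated by `(u, s)` is a well-defined bijection onto the set `𝒫` of
conjugacy classes of nontrivial finite subgroups of `Γ`: classes `[u]`, `[v]` agree in the
cokernel iff the corresponding subgroups are conjugate (well-definedness and injectivity),
and every nontrivial finite subgroup is conjugate to one in the image (surjectivity). -/
theorem coker_bijects_onto_conjugacy_classes (p n : ℕ) (hp : p.Prime) (hodd : Odd p)
    (hn : 0 < n)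
    (ρ : Multiplicative (ZMod p) →* Matrix.GeneralLinearGroup (Fin n) ℤ)
    (hfree : ∀ g : Multiplicative (ZMod p), g ≠ 1 → ∀ v : Fin n → ℤ,
      (ρ g : Matrix (Fin n) (Fin n) ℤ).mulVec v = v → v = 0)
    (s : ZMod p) (hs : addOrderOf s = p) :
    (∀ u v : Fin n → ℤ,
      u - v ∈ LinearMap.range
          (Matrix.mulVecLin ((ρ (Multiplicative.ofAdd s) : Matrix (Fin n) (Fin n) ℤ) - 1)) ↔
        ConjSub
          (Subgroup.zpowers (⟨Multiplicative.ofAdd u, Multiplicative.ofAdd s⟩ : Gamma ρ))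
          (Subgroup.zpowers (⟨Multiplicative.ofAdd v, Multiplicative.ofAdd s⟩ : Gamma ρ))) ∧
    (∀ P : Subgroup (Gamma ρ), P ≠ ⊥ → Finite P →
      ∃ u : Fin n → ℤ,
        ConjSub
          (Subgroup.zpowers (⟨Multiplicative.ofAdd u, Multiplicative.ofAdd s⟩ : Gamma ρ)) P) :=
  coker_bijects_onto_conjugacy_classes_general p n hp ρ hfree s hs
end

section
/- Let ρ : ℤ/p → GL_n(ℤ) be any group homomorphism (p prime). Then the induced action of ℤ/p on ℤ^n ∖ {0} is free (i.e., ρ(g)v = v with g ≠ 1 implies v = 0) if and only if the fixed-point set of the induced ℤ/p-action on the torus T^n = ℝ^n/ℤ^n is finite. -/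
/-- The standard lattice `ℤⁿ ⊆ ℝⁿ` as an additive subgroup. -/
noncomputable def intLattice (n : ℕ) : AddSubgroup (Fin n → ℝ) :=
  ((Int.castAddHom ℝ).compLeft (Fin n)).range

/-- The torus `Tⁿ = ℝⁿ/ℤⁿ`. -/
noncomputable abbrev Torus (n : ℕ) : Type := (Fin n → ℝ) ⧸ intLattice n

/-- The fixed-point set of the `ℤ/p`-action on `Tⁿ = ℝⁿ/ℤⁿ` induced by `ρ`: a point `x` of the
torus is fixed iff for every `g` and every lift `y` of `x`, the class of `ρ(g)y` is again `x`. -/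
def torusFixedPoints (p n : ℕ)
    (ρ : Multiplicative (ZMod p) →* Matrix.GeneralLinearGroup (Fin n) ℤ) :
    Set (Torus n) :=
  {x | ∀ g : Multiplicative (ZMod p), ∀ y : Fin n → ℝ,
    (QuotientAddGroup.mk y : Torus n) = x →
      (QuotientAddGroup.mk (((ρ g : Matrix (Fin n) (Fin n) ℤ).map
        (Int.cast : ℤ → ℝ)).mulVec y) : Torus n) = x}

/-!
If some `g ≠ 1` fixes a nonzero `v ∈ ℤⁿ`, then `g` generates the group of prime order `p`, so all
of `ℤ/p` fixes `v` and every point of the image of the line `ℝv` in `Tⁿ`, an infinite set, is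
fixed.
Conversely, if the action is free then `A - 1` is injective on `ℤⁿ` for `A = ρ(g)`, `g ≠ 1`, so
`k = det (A - 1) ≠ 0`. A fixed point `x` satisfies `(A - 1)x = 0` in `Tⁿ`, hence, applying the
adjugate, `k • x = 0`; and the `k`-torsion of `Tⁿ` is finite.
-/

open Matrix Set QuotientAddGroup

section FixedVectors

variable {G R n : Type*} [Group G] [CommRing R] [Fintype n] [DecidableEq n]

def mulVecStabilizer (ρ : G →* GL n R) (v : n → R) : Subgroup G where
  carrier := {g | (ρ g : Matrix n n R) *ᵥ v = v}
  mul_mem' {a b} ha hb := by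
    simp only [mem_ofPred_eq, map_mul, Units.val_mul, ← mulVec_mulVec] at ha hb ⊢
    rw [hb, ha]
  one_mem' := by simp
  inv_mem' {a} ha := by
    simp only [mem_ofPred_eq] at ha ⊢
    conv_lhs => rw [← ha]
    rw [mulVec_mulVec, ← Units.val_mul, ← map_mul, inv_mul_cancel, map_one, Units.val_one,
      one_mulVec]

theorem mulVecStabilizer_eq_top [Fact (Nat.card G).Prime] {ρ : G →* GL n R} {v : n → R}
    {g : G} (hg : g ≠ 1) (hv : (ρ g : Matrix n n R) *ᵥ v = v) : mulVecStabilizer ρ v = ⊤ :=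
  (mulVecStabilizer ρ v).eq_bot_or_eq_top_of_prime_card.resolve_left fun h =>
    hg ((Subgroup.eq_bot_iff_forall _).1 h g hv)

theorem det_sub_one_ne_zero [IsDomain R] {A : Matrix n n R} (hA : ∀ v, A *ᵥ v = v → v = 0) :
    (A - 1).det ≠ 0 := fun h => by
  obtain ⟨v, hv0, hv⟩ := exists_mulVec_eq_zero_iff.2 h
  rw [sub_mulVec, one_mulVec, sub_eq_zero] at hv
  exact hv0 (hA v hv)

end FixedVectors

section Torus

variable {n : ℕ}

theorem mem_intLattice_iff {z : Fin n → ℝ} :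
    z ∈ intLattice n ↔ ∃ c : Fin n → ℤ, Int.cast ∘ c = z :=
  Iff.rfl

theorem map_intCast_mulVec (M : Matrix (Fin n) (Fin n) ℤ) (c : Fin n → ℤ) :
    M.map (Int.cast : ℤ → ℝ) *ᵥ (Int.cast ∘ c) = Int.cast ∘ (M *ᵥ c) :=
  funext fun i => (RingHom.map_mulVec (Int.castRingHom ℝ) M c i).symm

theorem map_intCast_mulVec_mem_intLattice (M : Matrix (Fin n) (Fin n) ℤ) {z : Fin n → ℝ}
    (hz : z ∈ intLattice n) : M.map (Int.cast : ℤ → ℝ) *ᵥ z ∈ intLattice n := by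
  obtain ⟨c, rfl⟩ := hz
  exact ⟨M *ᵥ c, (map_intCast_mulVec M c).symm⟩

theorem det_smul_mem_intLattice {M : Matrix (Fin n) (Fin n) ℤ} {y : Fin n → ℝ}
    (hy : M.map (Int.cast : ℤ → ℝ) *ᵥ y ∈ intLattice n) : M.det • y ∈ intLattice n := by
  have hadj : M.adjugate.map (Int.cast : ℤ → ℝ) * M.map Int.cast = (M.det : ℝ) • 1 := by
    have := congrArg (Int.castRingHom ℝ).mapMatrix (adjugate_mul M)
    rwa [map_mul, map_zsmul, map_one, ← Int.cast_smul_eq_zsmul ℝ] at this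
  have := map_intCast_mulVec_mem_intLattice M.adjugate hy
  rwa [mulVec_mulVec, hadj, smul_mulVec, one_mulVec, Int.cast_smul_eq_zsmul] at this

theorem finite_setOf_zsmul_eq_zero {k : ℤ} (hk : k ≠ 0) : {x : Torus n | k • x = 0}.Finite := by
  refine ((Set.Finite.pi fun _ => Set.finite_Ico 0 (k.natAbs : ℤ)).image
    fun d => (mk ((k : ℝ)⁻¹ • (Int.cast ∘ d)) : Torus n)).subset ?_
  intro x hx
  obtain ⟨y, rfl⟩ := mk_surjective x
  obtain ⟨d, hd⟩ := mem_intLattice_iff.1 <| by rwa [mem_ofPred, ← mk_zsmul, eq_zero_iff] at hx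
  -- `y = k⁻¹ d` is congruent to `k⁻¹ (d mod k)` modulo `ℤⁿ`
  refine ⟨fun i => d i % k, fun i _ => ⟨Int.emod_nonneg _ hk, Int.emod_lt _ hk⟩, ?_⟩
  refine eq_iff_sub_mem.2 <| mem_intLattice_iff.2 ⟨fun i => -(d i / k), funext fun i => ?_⟩
  have hdi : (d i : ℝ) = k * y i := by simpa using congrFun hd i
  simp only [Pi.sub_apply, Pi.smul_apply, Function.comp_apply, smul_eq_mul]
  rw [Int.emod_def]
  push_cast
  field_simp
  rw [hdi]
  ring

theorem torusFixedPoints_subset_zsmul_eq_zero {p : ℕ}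
    (ρ : Multiplicative (ZMod p) →* GL (Fin n) ℤ) (g : Multiplicative (ZMod p)) :
    torusFixedPoints p n ρ ⊆ {x | ((ρ g : Matrix (Fin n) (Fin n) ℤ) - 1).det • x = 0} := by
  intro x hx
  obtain ⟨y, rfl⟩ := mk_surjective x
  have hfix := eq_iff_sub_mem.1 (hx g y rfl)
  rw [mem_ofPred, ← mk_zsmul, eq_zero_iff]
  apply det_smul_mem_intLattice
  rwa [Matrix.map_sub, Matrix.map_one, sub_mulVec, one_mulVec] <;> simp

theorem mk_smul_mem_torusFixedPoints {p : ℕ} {ρ : Multiplicative (ZMod p) →* GL (Fin n) ℤ}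
    {v : Fin n → ℤ} (hv : ∀ g, (ρ g : Matrix (Fin n) (Fin n) ℤ) *ᵥ v = v) (t : ℝ) :
    (mk (t • (Int.cast ∘ v)) : Torus n) ∈ torusFixedPoints p n ρ := by
  intro g y hy
  rw [eq_iff_sub_mem] at hy ⊢
  have hvR : (ρ g : Matrix (Fin n) (Fin n) ℤ).map (Int.cast : ℤ → ℝ) *ᵥ (Int.cast ∘ v) =
      Int.cast ∘ v := by rw [map_intCast_mulVec, hv]
  have := map_intCast_mulVec_mem_intLattice (ρ g : Matrix (Fin n) (Fin n) ℤ) hy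
  rwa [mulVec_sub, mulVec_smul, hvR] at this

theorem injOn_mk_smul {v : Fin n → ℤ} {i : Fin n} (hi : v i ≠ 0) :
    InjOn (fun t : ℝ => (mk (t • (Int.cast ∘ v)) : Torus n)) (Ico 0 |(v i : ℝ)|⁻¹) := by
  intro s hs t ht hst
  obtain ⟨c, hc⟩ := mem_intLattice_iff.1 (eq_iff_sub_mem.1 hst)
  have hci : (c i : ℝ) = (s - t) * v i := by simpa [sub_mul] using congrFun hc i
  have hlt : |(c i : ℝ)| < 1 := by
    rw [hci, abs_mul]
    have hvi : 0 < |(v i : ℝ)| := abs_pos.2 (Int.cast_ne_zero.2 hi)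
    calc |s - t| * |(v i : ℝ)| < |(v i : ℝ)|⁻¹ * |(v i : ℝ)| :=
          mul_lt_mul_of_pos_right (abs_sub_lt_of_nonneg_of_lt hs.1 hs.2 ht.1 ht.2) hvi
      _ = 1 := inv_mul_cancel₀ hvi.ne'
  have hc0 : c i = 0 := Int.abs_lt_one_iff.1 (by exact_mod_cast hlt)
  rw [hc0, Int.cast_zero, eq_comm, mul_eq_zero, sub_eq_zero] at hci
  exact hci.resolve_right (by exact_mod_cast hi)

end Torus

theorem free_iff_torus_fixed_points_finite_general (p n : ℕ) (hp : p.Prime)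
    (ρ : Multiplicative (ZMod p) →* Matrix.GeneralLinearGroup (Fin n) ℤ) :
    (∀ g : Multiplicative (ZMod p), g ≠ 1 → ∀ v : Fin n → ℤ,
        (ρ g : Matrix (Fin n) (Fin n) ℤ).mulVec v = v → v = 0) ↔
      (torusFixedPoints p n ρ).Finite := by
  have : Fact p.Prime := ⟨hp⟩
  constructor
  · intro hfree
    obtain ⟨g, hg⟩ := exists_ne (1 : Multiplicative (ZMod p))
    exact (finite_setOf_zsmul_eq_zero (det_sub_one_ne_zero (hfree g hg))).subset
      (torusFixedPoints_subset_zsmul_eq_zero ρ g)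
  · intro hfin
    by_contra! hfree
    obtain ⟨g, hg, v, hv, hv0⟩ := hfree
    obtain ⟨i, hi⟩ := Function.ne_iff.1 hv0
    have : Fact (Nat.card (Multiplicative (ZMod p))).Prime :=
      ⟨by rwa [Nat.card_congr Multiplicative.toAdd, Nat.card_zmod]⟩
    have hfix (g' : Multiplicative (ZMod p)) : (ρ g' : Matrix (Fin n) (Fin n) ℤ) *ᵥ v = v :=
      (mulVecStabilizer_eq_top hg hv).ge trivial
    exact infinite_of_injOn_mapsTo (injOn_mk_smul hi)
      (fun t _ => mk_smul_mem_torusFixedPoints hfix t)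
      (Ico_infinite (inv_pos.2 (abs_pos.2 (Int.cast_ne_zero.2 hi)))) hfin

/-- For any homomorphism `ρ : ℤ/p → GL_n(ℤ)` (`p` prime), the induced action of `ℤ/p` on
`ℤⁿ ∖ {0}` is free if and only if the fixed-point set of the induced `ℤ/p`-action on the torus
`Tⁿ = ℝⁿ/ℤⁿ` is finite. -/
theorem free_iff_torus_fixed_points_finite (p n : ℕ) (hp : p.Prime) (hn : 0 < n)
    (ρ : Multiplicative (ZMod p) →* Matrix.GeneralLinearGroup (Fin n) ℤ) :
    (∀ g : Multiplicative (ZMod p), g ≠ 1 → ∀ v : Fin n → ℤ,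
        (ρ g : Matrix (Fin n) (Fin n) ℤ).mulVec v = v → v = 0) ↔
      (torusFixedPoints p n ρ).Finite :=
  free_iff_torus_fixed_points_finite_general p n hp ρ
end

section
/- Two subgroups P and Q of Γ of order p are conjugate in Γ if and only if they have the same image under the projection pr : Γ → Γ_ab onto the abelianization of Γ. -/
open Multiplicative

/-!
Conjugate subgroups have the same image in any abelian quotient. Conversely, let `x = (a, g)`
generate `P`. Since `ℤⁿ` is torsion-free, `g ≠ 1`, so `g` generates `ℤ/p` and
`ρ(g^m) - 1 = (ρ(g) - 1)(1 + ρ(g) + ⋯ + ρ(g)^(m-1))`. As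
`[(a, h), (b, k)] = ((ρ(h) - 1) b - (ρ(k) - 1) a, 1)`, the commutator subgroup consists of
translations by vectors of `(ρ(g) - 1) ℤⁿ`. Hence an element `z ∈ Q` with the same image as `x`
in `Γ_ab` is `(a + (ρ(g) - 1) c, g)`, the conjugate of `x` by the translation by `-c`, and
`Q = ⟨z⟩` is conjugate to `P = ⟨x⟩`.
-/

open scoped commutatorElement

namespace Subgroup

variable {G : Type*} [Group G] {p : ℕ} {P : Subgroup G}

lemma exists_mem_ne_one_of_card_eq_prime (hp : p.Prime) (hP : Nat.card P = p) :
    ∃ x ∈ P, x ≠ 1 := by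
  have hP_ne_bot : P ≠ ⊥ := by
    rintro rfl
    exact hp.one_lt.ne (card_bot.symm.trans hP)
  obtain ⟨⟨x, hxP⟩, hx1⟩ := ne_bot_iff_exists_ne_one.mp hP_ne_bot
  exact ⟨x, hxP, by simpa using hx1⟩

lemma pow_eq_one_of_mem_of_card_eq (hP : Nat.card P = p) {x : G} (hx : x ∈ P) : x ^ p = 1 := by
  simpa [hP] using congrArg Subtype.val (pow_card_eq_one' (x := (⟨x, hx⟩ : P)))

lemma eq_zpowers_of_card_eq_prime [Fact p.Prime] (hP : Nat.card P = p) {x : G} (hx : x ∈ P)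
    (hx1 : x ≠ 1) : P = zpowers x := by
  refine le_antisymm (fun z hz => ?_) (zpowers_le.mpr hx)
  obtain ⟨k, hk⟩ := mem_zpowers_iff.mp <|
    mem_zpowers_of_prime_card hP (g := ⟨x, hx⟩) (g' := ⟨z, hz⟩) (by simpa using hx1)
  exact mem_zpowers_iff.mpr ⟨k, congrArg Subtype.val hk⟩

end Subgroup

lemma Abelianization.map_of_map_conj {G : Type*} [Group G] (γ : G) (P : Subgroup G) :
    (P.map (MulAut.conj γ).toMonoidHom).map of = P.map of := by
  rw [Subgroup.map_map]
  congr 1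
  ext z
  simp

namespace MulAut

variable {N : Type*} [CommGroup N]

/-- In additive notation, the image of `σ - 1`. -/
def divSelfRange (σ : MulAut N) : Subgroup N :=
  (σ.toMonoidHom / MonoidHom.id N).range

lemma apply_div_self_mem_divSelfRange (σ : MulAut N) (c : N) : σ c / c ∈ σ.divSelfRange :=
  ⟨c, rfl⟩

lemma pow_apply_div_self_mem_divSelfRange (σ : MulAut N) (m : ℕ) (c : N) :
    (σ ^ m) c / c ∈ σ.divSelfRange := by
  induction m with
  | zero => simp [one_mem]
  | succ m ih =>
    rw [pow_succ', mul_apply, ← div_mul_div_cancel _ ((σ ^ m) c)]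
    exact mul_mem (σ.apply_div_self_mem_divSelfRange _) ih

lemma apply_div_self_mem_divSelfRange_of_card_eq_prime {G : Type*} [Group G] {p : ℕ}
    [Fact p.Prime] (hG : Nat.card G = p) (φ : G →* MulAut N) {g : G} (hg : g ≠ 1) (h : G)
    (c : N) : φ h c / c ∈ (φ g).divSelfRange := by
  obtain ⟨m, rfl⟩ := (Submonoid.mem_powers_iff _ _).mp (mem_powers_of_prime_card hG hg (g' := h))
  rw [map_pow]
  exact pow_apply_div_self_mem_divSelfRange _ m c

end MulAut

namespace SemidirectProduct

variable {N G : Type*} [CommGroup N]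

section

variable [Group G] {φ : G →* MulAut N}

lemma inl_mul_mul_inv_inl (c : N) (x : N ⋊[φ] G) :
    inl c * x * (inl c)⁻¹ = inl (c / φ x.right c) * x := by
  ext
  · simp [-map_div, div_eq_mul_inv, mul_comm, mul_assoc]
  · simp [-map_div]

lemma isConj_of_div_mem_divSelfRange {x y : N ⋊[φ] G}
    (h : y / x ∈ (φ x.right).divSelfRange.map inl) :
    IsConj x y := by
  obtain ⟨_, ⟨c, rfl⟩, hc⟩ := h
  refine isConj_iff.mpr ⟨inl c⁻¹, ?_⟩
  rw [inl_mul_mul_inv_inl, ← div_mul_cancel y x, ← hc]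
  simp [-map_div, div_eq_mul_inv, mul_comm]

lemma right_ne_one_of_pow_eq_one [IsMulTorsionFree N] {x : N ⋊[φ] G} (hx : x ≠ 1) {m : ℕ}
    (hm : m ≠ 0) (hxm : x ^ m = 1) : x.right ≠ 1 := by
  intro hright
  have hx_inl : inl x.left = x := by ext <;> simp [hright]
  rw [← hx_inl, ← map_pow, ← map_one inl, inl_inj, pow_eq_one_iff_left hm] at hxm
  exact hx (by rw [← hx_inl, hxm, map_one])

end

variable [CommGroup G] {φ : G →* MulAut N}

lemma commutatorElement_eq_inl (x y : N ⋊[φ] G) :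
    ⁅x, y⁆ = inl ((φ x.right y.left / y.left) / (φ y.right x.left / x.left)) := by
  ext
  · simp only [commutatorElement_def, mul_left, inv_left, mul_right, inv_right, left_inl]
    rw [← MulAut.mul_apply, ← map_mul, mul_inv_cancel_comm, ← MulAut.mul_apply, ← map_mul,
      mul_inv_cancel, map_one, MulAut.one_apply, map_inv]
    simp [div_eq_mul_inv, mul_comm, mul_left_comm, mul_assoc]
  · simp [-map_div, commutatorElement_def]

lemma commutator_le_map_inl {M : Subgroup N} (hM : ∀ g a, φ g a / a ∈ M) :
    commutator (N ⋊[φ] G) ≤ M.map inl := by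
  rw [commutator_def, Subgroup.commutator_le]
  intro x _ y _
  rw [commutatorElement_eq_inl]
  exact Subgroup.mem_map_of_mem _ (div_mem (hM _ _) (hM _ _))

end SemidirectProduct

theorem conjugate_iff_same_image_in_abelianization_general (p n : ℕ) (hp : p.Prime)
    (ρ : Multiplicative (ZMod p) →* Matrix.GeneralLinearGroup (Fin n) ℤ)
    (P Q : Subgroup (Gamma ρ)) (hP : Nat.card P = p) (hQ : Nat.card Q = p) :
    (∃ γ : Gamma ρ, Subgroup.map (MulAut.conj γ).toMonoidHom P = Q) ↔
      Subgroup.map (Abelianization.of (G := Gamma ρ)) P =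
        Subgroup.map (Abelianization.of (G := Gamma ρ)) Q := by
  refine ⟨fun ⟨γ, hγ⟩ => hγ ▸ (Abelianization.map_of_map_conj γ P).symm, fun hmap => ?_⟩
  have := Fact.mk hp
  obtain ⟨x, hxP, hx1⟩ := P.exists_mem_ne_one_of_card_eq_prime hp hP
  obtain ⟨z, hzQ, hzx⟩ : Abelianization.of x ∈ Q.map Abelianization.of :=
    hmap ▸ Subgroup.mem_map_of_mem _ hxP
  have hx_right : x.right ≠ 1 := SemidirectProduct.right_ne_one_of_pow_eq_one hx1 hp.ne_zero
    (Subgroup.pow_eq_one_of_mem_of_card_eq hP hxP)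
  have hcomm := SemidirectProduct.commutator_le_map_inl <|
    MulAut.apply_div_self_mem_divSelfRange_of_card_eq_prime (G := Multiplicative (ZMod p))
      (Nat.card_zmod p) (matAutHom ρ) hx_right
  obtain ⟨γ, rfl⟩ := isConj_iff.mp <| SemidirectProduct.isConj_of_div_mem_divSelfRange <|
    hcomm (QuotientGroup.eq_iff_div_mem.mp hzx)
  refine ⟨γ, ?_⟩
  rw [P.eq_zpowers_of_card_eq_prime hP hxP hx1, MonoidHom.map_zpowers,
    Q.eq_zpowers_of_card_eq_prime hQ hzQ (by simpa using hx1)]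
  rfl

/-- Two subgroups `P`, `Q` of `Γ = ℤⁿ ⋊_ρ ℤ/p` of order `p` are conjugate in `Γ` if and only
if they have the same image under the projection `pr : Γ → Γ_ab` onto the abelianization. -/
theorem conjugate_iff_same_image_in_abelianization (p n : ℕ) (hp : p.Prime) (hodd : Odd p)
    (hn : 0 < n)
    (ρ : Multiplicative (ZMod p) →* Matrix.GeneralLinearGroup (Fin n) ℤ)
    (hfree : ∀ g : Multiplicative (ZMod p), g ≠ 1 → ∀ v : Fin n → ℤ,
      (ρ g : Matrix (Fin n) (Fin n) ℤ).mulVec v = v → v = 0)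
    (P Q : Subgroup (Gamma ρ)) (hP : Nat.card P = p) (hQ : Nat.card Q = p) :
    (∃ γ : Gamma ρ, Subgroup.map (MulAut.conj γ).toMonoidHom P = Q) ↔
      Subgroup.map (Abelianization.of (G := Gamma ρ)) P =
        Subgroup.map (Abelianization.of (G := Gamma ρ)) Q :=
  conjugate_iff_same_image_in_abelianization_general p n hp ρ P Q hP hQ
end

section
/- For every subgroup P of Γ of order p, the restriction to P of the projection pr : Γ → Γ_ab onto the abelianization is injective; equivalently, P ∩ [Γ,Γ] = {1}, so the image P' = pr(P) is a subgroup of Γ_ab of order p. -/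
open Multiplicative

/-- For every subgroup `P` of `Γ = ℤⁿ ⋊_ρ ℤ/p` of order `p`, the projection `pr : Γ → Γ_ab`
restricted to `P` is injective; equivalently `P ⊓ [Γ,Γ] = ⊥`, so `pr(P)` has order `p`. -/
theorem abelianization_injOn_of_card_p (p n : ℕ) (hp : p.Prime) (hodd : Odd p) (hn : 0 < n)
    (ρ : Multiplicative (ZMod p) →* Matrix.GeneralLinearGroup (Fin n) ℤ)
    (hfree : ∀ g : Multiplicative (ZMod p), g ≠ 1 → ∀ v : Fin n → ℤ,
      (ρ g : Matrix (Fin n) (Fin n) ℤ).mulVec v = v → v = 0)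
    (P : Subgroup (Gamma ρ)) (hP : Nat.card P = p) :
    Set.InjOn (Abelianization.of (G := Gamma ρ)) (P : Set (Gamma ρ)) ∧
      P ⊓ commutator (Gamma ρ) = ⊥ ∧
      Nat.card (Subgroup.map (Abelianization.of (G := Gamma ρ)) P) = p := by
  have hp0 : p ≠ 0 := hp.ne_zero
  -- Any element of P with trivial right component is trivial.
  have key : ∀ x : Gamma ρ, x ∈ P → x.right = 1 → x = 1 := by
    intro x hx hr
    have hord : orderOf x ∣ p := by
      simpa [hP] using P.orderOf_dvd_natCard hx
    have hxp : x ^ p = 1 := orderOf_dvd_iff_pow_eq_one.mp hord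
    have hx_eq : x = SemidirectProduct.inl x.left := by
      ext
      · simp
      · simp [hr]
    rw [hx_eq] at hxp
    have hlp : x.left ^ p = 1 := by
      apply SemidirectProduct.inl_injective (φ := matAutHom ρ)
      rw [map_pow, map_one]; exact hxp
    have hv : (p : ℤ) • (Multiplicative.toAdd x.left) = 0 := by
      have := congrArg Multiplicative.toAdd hlp
      simpa [toAdd_pow, ← Nat.cast_smul_eq_nsmul (R := ℤ)] using this
    have hv0 : Multiplicative.toAdd x.left = 0 := by
      rcases smul_eq_zero.mp hv with h | h
      · exact absurd (by exact_mod_cast h) (by exact_mod_cast hp0)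
      · exact h
    have : x.left = 1 := by
      have := congrArg Multiplicative.ofAdd hv0
      simpa using this
    rw [hx_eq, this, map_one]
  -- commutator lies in the kernel of rightHom
  have hcomm : commutator (Gamma ρ) ≤
      (SemidirectProduct.rightHom :
        Gamma ρ →* Multiplicative (ZMod p)).ker :=
    Abelianization.commutator_subset_ker _
  have hinf : P ⊓ commutator (Gamma ρ) = ⊥ := by
    rw [eq_bot_iff]
    rintro x ⟨hxP, hxC⟩
    have hr : x.right = 1 := hcomm hxC
    simpa [Subgroup.mem_bot] using key x hxP hr
  have hinj : Set.InjOn (Abelianization.of (G := Gamma ρ)) (P : Set (Gamma ρ)) := by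
    intro a ha b hb hab
    have hmem : a⁻¹ * b ∈ commutator (Gamma ρ) := by
      have : (QuotientGroup.mk a : Gamma ρ ⧸ commutator (Gamma ρ)) = QuotientGroup.mk b := hab
      exact (QuotientGroup.eq (s := commutator (Gamma ρ))).mp this
    have hmemP : a⁻¹ * b ∈ P := mul_mem (inv_mem ha) hb
    have : a⁻¹ * b ∈ P ⊓ commutator (Gamma ρ) := ⟨hmemP, hmem⟩
    rw [hinf, Subgroup.mem_bot] at this
    exact inv_mul_eq_one.mp this
  refine ⟨hinj, hinf, ?_⟩
  have hcard : Nat.card (Subgroup.map (Abelianization.of (G := Gamma ρ)) P) = Nat.card P :=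
    calc Nat.card (Subgroup.map (Abelianization.of (G := Gamma ρ)) P)
        = Nat.card (Abelianization.of '' (P : Set (Gamma ρ))) := rfl
      _ = Nat.card (P : Set (Gamma ρ)) := Nat.card_image_of_injOn hinj
      _ = Nat.card P := rfl
  exact hcard.trans hP
end
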